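/- Consider the reflected Euler scheme in ℝ^m as above, with the multifunction C decreasing: C(t) ⊂ C(s) for t ≥ s. Let X̄^1,…,X̄^N be N independent copies of the scheme and Ĉ_{N,j} = conv{X̄_j^1,…,X̄_j^N}. Then for every j ∈ {1,…,n} and every x ∈ int(C(t_j)), d(x, Ĉ_{N,j}) → 0 in probability as N → ∞. -/

import Mathlib

open MeasureTheory ProbabilityTheory Filter Metric Topology
open scoped RealInnerProductSpace

/-!
Fix `j ≥ 1`. The scheme at time `j` is a continuous function `Φ` of the countably many real
Gaussian coordinates of the noise, since projections onto convex sets are 1-Lipschitz. It reaches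
every `x ∈ C(t_j)`: whatever `X̄_{j-1}` is, the increment
`σ(X̄_{j-1})⁻¹(x - X̄_{j-1} - b(X̄_{j-1})Δ_n)` puts the unprojected point at `x`, which the
projection fixes. So `Φ⁻¹(B(x, ε))` is a nonempty open set and has positive mass `p` under the
product of the nondegenerate Gaussian laws. The copies are i.i.d., hence no `X̄_j^i`, `i ≤ N`,
lies in `B(x, ε)` with probability `(1 - p)^(N+1) → 0`; if one does, `d(x, Ĉ_{N,j}) < ε`.
-/

lemma Convex.lipschitzWith_one_of_isNearest {F : Type*} [NormedAddCommGroup F]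
    [InnerProductSpace ℝ F] {K : Set F} (hK : Convex ℝ K) {p : F → F}
    (hp : ∀ x, p x ∈ K ∧ ∀ y ∈ K, dist x (p x) ≤ dist x y) : LipschitzWith 1 p := by
  have hvar : ∀ x, ∀ w ∈ K, ⟪x - p x, w - p x⟫ ≤ 0 := by
    intro x
    have : Nonempty K := ⟨⟨p x, (hp x).1⟩⟩
    refine (norm_eq_iInf_iff_real_inner_le_zero hK (hp x).1).1 (le_antisymm ?_ ?_)
    · exact le_ciInf fun w => by simpa only [dist_eq_norm] using (hp x).2 w w.2
    · exact ciInf_le ⟨0, Set.forall_mem_range.2 fun _ => norm_nonneg _⟩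
        (⟨p x, (hp x).1⟩ : K)
  refine LipschitzWith.of_dist_le_mul fun x y => ?_
  have hx := hvar x (p y) (hp y).1
  have hy := hvar y (p x) (hp x).1
  have hsq : ‖p x - p y‖ ^ 2 ≤ ⟪x - y, p x - p y⟫ := by
    have : ⟪x - y, p x - p y⟫ =
        ‖p x - p y‖ ^ 2 - ⟪x - p x, p y - p x⟫ - ⟪y - p y, p x - p y⟫ := by
      rw [← real_inner_self_eq_norm_sq]
      simp only [inner_sub_left, inner_sub_right, real_inner_comm]
      ring
    linarith
  have := hsq.trans (real_inner_le_norm _ _)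
  rw [dist_eq_norm, dist_eq_norm, NNReal.coe_one, one_mul]
  nlinarith [norm_nonneg (x - y), norm_nonneg (p x - p y)]

section DrivenOrbit

variable {X U : Type*}

def drivenOrbit (step : ℕ → X → U → X) (x₀ : X) : ℕ → (ℕ → U) → X
  | 0, _ => x₀
  | j + 1, u => step j (drivenOrbit step x₀ j u) (u j)

variable {step : ℕ → X → U → X} {x₀ : X}

lemma drivenOrbit_congr {j : ℕ} {u v : ℕ → U} (h : ∀ k < j, u k = v k) :
    drivenOrbit step x₀ j u = drivenOrbit step x₀ j v := by
  induction j with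
  | zero => rfl
  | succ j ih =>
    rw [drivenOrbit, drivenOrbit, ih fun k hk => h k (by omega), h j j.lt_succ_self]

lemma continuous_drivenOrbit [TopologicalSpace X] [TopologicalSpace U]
    (hstep : ∀ k, Continuous (Function.uncurry (step k))) (j : ℕ) :
    Continuous (drivenOrbit step x₀ j) := by
  induction j with
  | zero => exact continuous_const
  | succ j ih => exact (hstep j).comp (ih.prodMk (continuous_apply j))

lemma eq_drivenOrbit {x : ℕ → X} {u : ℕ → U} (h0 : x 0 = x₀)
    (hsucc : ∀ j, x (j + 1) = step j (x j) (u j)) (j : ℕ) : x j = drivenOrbit step x₀ j u := by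
  induction j with
  | zero => exact h0
  | succ j ih => rw [hsucc, ih, drivenOrbit]

lemma exists_drivenOrbit_succ_eq [Nonempty U] {j : ℕ} {x : X}
    (hx : ∀ y, ∃ w, step j y w = x) :
    ∃ u, drivenOrbit step x₀ (j + 1) u = x := by
  inhabit U
  obtain ⟨w, hw⟩ := hx (drivenOrbit step x₀ j fun _ => default)
  refine ⟨Function.update (fun _ => default) j w, ?_⟩
  rw [drivenOrbit, Function.update_self, ← hw]
  congr 1
  exact drivenOrbit_congr fun k hk => Function.update_of_ne hk.ne _ _

end DrivenOrbit

instance MeasureTheory.Measure.infinitePi.isOpenPosMeasure {ι : Type*} {X : ι → Type*}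
    [∀ i, MeasurableSpace (X i)] [∀ i, TopologicalSpace (X i)]
    [∀ i, OpensMeasurableSpace (X i)] (μ : ∀ i, Measure (X i)) [∀ i, IsProbabilityMeasure (μ i)]
    [∀ i, (μ i).IsOpenPosMeasure] :
    (Measure.infinitePi μ).IsOpenPosMeasure := by
  refine ⟨fun V hV ⟨a, ha⟩ => ne_of_gt ?_⟩
  obtain ⟨I, u, hu, hIV⟩ := isOpen_pi_iff.1 hV a ha
  refine lt_of_lt_of_le ?_ (measure_mono hIV)
  rw [Measure.infinitePi_pi _ fun i hi => (hu i hi).1.measurableSet,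
    CanonicallyOrderedAdd.prod_pos]
  exact fun i hi => (hu i hi).1.measure_pos (μ i) ⟨a i, (hu i hi).2⟩

lemma ProbabilityTheory.isOpenPosMeasure_gaussianReal (μ : ℝ) {v : NNReal} (hv : v ≠ 0) :
    (gaussianReal μ v).IsOpenPosMeasure :=
  (gaussianReal_absolutelyContinuous' μ hv).isOpenPosMeasure

lemma ProbabilityTheory.iIndepFun.map_curry_eq_infinitePi {Ω ι κ β : Type*}
    [MeasurableSpace Ω] [MeasurableSpace β] {P : Measure Ω} {X : ι × κ → Ω → β}
    (hX : ∀ p, Measurable (X p))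
    (hind : iIndepFun X P) {ν : Measure β} [IsProbabilityMeasure ν]
    (hlaw : ∀ p, P.map (X p) = ν) :
    P.map (fun ω i j => X (i, j) ω) =
      Measure.infinitePi fun _ : ι => Measure.infinitePi fun _ : κ => ν := by
  have : (fun ω i j => X (i, j) ω) = MeasurableEquiv.curry ι κ β ∘ fun ω p => X p ω := rfl
  rw [this, ← Measure.map_map (MeasurableEquiv.measurable _) (measurable_pi_lambda _ hX),
    hind.map_fun_eq_infinitePi_map hX, funext hlaw]
  exact Measure.infinitePi_map_curry fun _ _ => ν

lemma tendsto_measure_forall_lt_notMem_of_map_eq_infinitePi {Ω β : Type*}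
    [MeasurableSpace Ω] [MeasurableSpace β] {P : Measure Ω} {Y : ℕ → Ω → β}
    (hY : Measurable fun ω i => Y i ω)
    {γ : Measure β} [IsProbabilityMeasure γ]
    (hlaw : P.map (fun ω i => Y i ω) = Measure.infinitePi fun _ => γ)
    {U : Set β} (hU : MeasurableSet U) (hpos : γ U ≠ 0) :
    Tendsto (fun N => P {ω | ∀ i < N, Y i ω ∉ U}) atTop (𝓝 0) := by
  have hN : ∀ N, P {ω | ∀ i < N, Y i ω ∉ U} = (1 - γ U) ^ N := by
    intro N
    have : {ω | ∀ i < N, Y i ω ∉ U} =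
        (fun ω i => Y i ω) ⁻¹' Set.pi (Finset.range N : Set ℕ) fun _ => Uᶜ := by
      ext ω; simp
    rw [this, ← Measure.map_apply hY (.pi (Finset.countable_toSet _) fun _ _ => hU.compl),
      hlaw, Measure.infinitePi_pi _ fun _ _ => hU.compl, prob_compl_eq_one_sub hU,
      Finset.prod_const, Finset.card_range]
  simp_rw [hN]
  exact ENNReal.tendsto_pow_atTop_nhds_zero_of_lt_one
    (ENNReal.sub_lt_self ENNReal.one_ne_top one_ne_zero hpos)

section ReflectedEulerStep

variable {E : Type*} [NormedAddCommGroup E] [NormedSpace ℝ E]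

def reflectedEulerStep (Pr : ℝ → E → E) (t : ℕ → ℝ) (h : ℝ) (b : E → E)
    (σ : E → E ≃L[ℝ] E) (k : ℕ) (v w : E) : E :=
  Pr (t (k + 1)) (v + h • b v + σ v w)

variable {Pr : ℝ → E → E} {t : ℕ → ℝ} {h : ℝ} {b : E → E} {σ : E → E ≃L[ℝ] E}

lemma continuous_reflectedEulerStep (hPr : ∀ s, Continuous (Pr s)) (hb : Continuous b)
    (hσ : Continuous fun v => (σ v : E →L[ℝ] E)) (k : ℕ) :
    Continuous (Function.uncurry (reflectedEulerStep Pr t h b σ k)) := by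
  have hσ_cont : Continuous fun p : E × E => σ p.1 p.2 := hσ.fst'.clm_apply continuous_snd
  change Continuous fun p : E × E => Pr (t (k + 1)) (p.1 + h • b p.1 + σ p.1 p.2)
  exact (hPr _).comp (by fun_prop)

lemma exists_reflectedEulerStep_eq {C : ℝ → Set E}
    (hPr : ∀ s x, Pr s x ∈ C s ∧ ∀ y ∈ C s, dist x (Pr s x) ≤ dist x y) {k : ℕ} {x : E}
    (hx : x ∈ C (t (k + 1))) (v : E) :
    ∃ w, reflectedEulerStep Pr t h b σ k v w = x := by
  have hfix : Pr (t (k + 1)) x = x :=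
    (dist_le_zero.1 (by simpa using (hPr _ x).2 x hx)).symm
  exact ⟨(σ v).symm (x - v - h • b v), by simp [reflectedEulerStep, hfix]⟩

end ReflectedEulerStep

lemma Metric.infDist_convexHull_image_lt {ι E : Type*} [NormedAddCommGroup E] [Module ℝ E]
    {f : ι → E} {s : Set ι} {i : ι} (hi : i ∈ s) {x : E} {ε : ℝ} (h : dist x (f i) < ε) :
    infDist x (convexHull ℝ (f '' s)) < ε :=
  (infDist_le_dist_of_mem (subset_convexHull ℝ _ (Set.mem_image_of_mem f hi))).trans_lt h

theorem stmt15_general {Ω : Type*} [MeasurableSpace Ω] (P : Measure Ω)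
    (m : ℕ) (T : ℝ) (hT : 0 < T) (n : ℕ) (hn : 0 < n)
    (t : ℕ → ℝ)
    (C : ℝ → Set (EuclideanSpace ℝ (Fin m)))
    (hCconvex : ∀ s, Convex ℝ (C s))
    (b : EuclideanSpace ℝ (Fin m) → EuclideanSpace ℝ (Fin m))
    (σ : EuclideanSpace ℝ (Fin m) →
      (EuclideanSpace ℝ (Fin m) ≃L[ℝ] EuclideanSpace ℝ (Fin m)))
    (Kb Kσ : NNReal) (hb : LipschitzWith Kb b)
    (hσ : LipschitzWith Kσ fun v =>
      (σ v : EuclideanSpace ℝ (Fin m) →L[ℝ] EuclideanSpace ℝ (Fin m)))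
    -- `Pr s` is the metric projection onto the convex body `C s`
    (Pr : ℝ → EuclideanSpace ℝ (Fin m) → EuclideanSpace ℝ (Fin m))
    (hPr : ∀ s x, Pr s x ∈ C s ∧ ∀ y ∈ C s, dist x (Pr s x) ≤ dist x y)
    (x₀ : EuclideanSpace ℝ (Fin m))
    -- the Brownian increments of the independent copies of the scheme:
    -- `Z i j = W^i_{t_{j+1}} − W^i_{t_j}` for copy `i`, all coordinates of all increments
    -- of all copies being i.i.d. `N(0,T/n)` Gaussian random variables
    (Z : ℕ → ℕ → Ω → EuclideanSpace ℝ (Fin m)) (hZm : ∀ i j, Measurable (Z i j))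
    (hZindep : iIndepFun
      (fun (p : ℕ × ℕ × Fin m) ω => Z p.1 p.2.1 ω p.2.2) P)
    (hZlaw : ∀ i j k, P.map (fun ω => Z i j ω k) = gaussianReal 0 (T / n).toNNReal)
    -- the independent copies of the reflected Euler scheme
    (Xb : ℕ → ℕ → Ω → EuclideanSpace ℝ (Fin m)) (hXb0 : ∀ i ω, Xb i 0 ω = x₀)
    (hXbrec : ∀ i j ω, Xb i (j + 1) ω =
      Pr (t (j + 1)) (Xb i j ω + (T / n) • b (Xb i j ω) + σ (Xb i j ω) (Z i j ω))) :
    ∀ j, 1 ≤ j → j ≤ n →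
      ∀ x ∈ interior (C (t j)), ∀ ε > (0:ℝ),
        Tendsto
          (fun N : ℕ =>
            P {ω | ε < infDist x (convexHull ℝ ((fun i => Xb i j ω) '' Set.Iio (N + 1)))})
          atTop (nhds 0) := by
  intro j hj _ x hx ε hε
  obtain ⟨k, rfl⟩ : ∃ k, j = k + 1 := ⟨j - 1, by omega⟩
  set step := reflectedEulerStep Pr t (T / n) b σ
  have hXb : ∀ i ω, Xb i (k + 1) ω = drivenOrbit step x₀ (k + 1) fun k => Z i k ω :=
    fun i ω => eq_drivenOrbit (x := fun j => Xb i j ω) (hXb0 i ω) (fun j => hXbrec i j ω) _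
  let Φ : (ℕ × Fin m → ℝ) → EuclideanSpace ℝ (Fin m) :=
    fun y => drivenOrbit step x₀ (k + 1) fun k => WithLp.toLp 2 fun l => y (k, l)
  have hΦ : Continuous Φ :=
    (continuous_drivenOrbit (continuous_reflectedEulerStep
      (fun s => ((hCconvex s).lipschitzWith_one_of_isNearest (hPr s)).continuous)
      hb.continuous hσ.continuous) (k + 1)).comp <|
        continuous_pi fun k => (PiLp.continuous_toLp 2 _).comp <|
          continuous_pi fun l => continuous_apply _
  obtain ⟨z, hz⟩ := exists_drivenOrbit_succ_eq (step := step) (x₀ := x₀)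
    (exists_reflectedEulerStep_eq hPr (interior_subset hx))
  have hv : (T / n).toNNReal ≠ 0 := by
    simpa only [ne_eq, Real.toNNReal_eq_zero, not_le] using div_pos hT (Nat.cast_pos.2 hn)
  have := isOpenPosMeasure_gaussianReal 0 hv
  set γ := Measure.infinitePi fun _ : ℕ × Fin m => gaussianReal 0 (T / n).toNNReal
  have hpos : γ (Φ ⁻¹' ball x ε) ≠ 0 :=
    (isOpen_ball.preimage hΦ).measure_ne_zero γ
      ⟨fun q => z q.1 q.2, by simpa [Φ, hz] using hε⟩
  have hcoord : ∀ p : ℕ × ℕ × Fin m, Measurable fun ω => Z p.1 p.2.1 ω p.2.2 := fun p => by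
    have := hZm p.1 p.2.1
    fun_prop
  have hlim := (tendsto_measure_forall_lt_notMem_of_map_eq_infinitePi
    (measurable_pi_lambda _ fun i => measurable_pi_lambda _ fun q => hcoord (i, q))
    (hZindep.map_curry_eq_infinitePi hcoord fun p => hZlaw _ _ _)
    (measurableSet_ball.preimage hΦ.measurable) hpos).comp (tendsto_add_atTop_nat 1)
  refine tendsto_of_tendsto_of_tendsto_of_le_of_le tendsto_const_nhds hlim (fun _ => zero_le)
    fun N => measure_mono ?_
  intro ω hω i hi hmem
  have hXi : dist x (Xb i (k + 1) ω) < ε := by rw [dist_comm, ← mem_ball, hXb]; exact hmem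
  exact (infDist_convexHull_image_lt (f := fun i => Xb i (k + 1) ω) (s := Set.Iio (N + 1))
    hi hXi).not_gt hω

/-- Reflected Euler scheme in `ℝ^m`:
`X̄_{j+1} = Π_{C(t_{j+1})}(X̄_j + b(X̄_j)Δ_n + σ(X̄_j)(W_{t_{j+1}} − W_{t_j}))`, `X̄_0 = x₀ ∈ C(0)`,
with `b, σ` Lipschitz, `σ` taking values in `GL_m(ℝ)`, and the convex bodies `C(t)`
decreasing (`C(t) ⊆ C(s)` for `t ≥ s`). Let `X̄^1, X̄^2, …` be independent copies of the
scheme and `Ĉ_{N,j} = conv{X̄_j^1,…,X̄_j^N}`. Then for every `j ∈ {1,…,n}` and every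
`x ∈ int(C(t_j))`, `d(x, Ĉ_{N,j}) → 0` in probability as `N → ∞`. -/
theorem stmt15 {Ω : Type*} [MeasurableSpace Ω] (P : Measure Ω) [IsProbabilityMeasure P]
    (m : ℕ) (T : ℝ) (hT : 0 < T) (n : ℕ) (hn : 0 < n)
    (t : ℕ → ℝ) (ht : ∀ j, t j = j * (T / n))
    (C : ℝ → Set (EuclideanSpace ℝ (Fin m)))
    (hCcompact : ∀ s, IsCompact (C s)) (hCconvex : ∀ s, Convex ℝ (C s))
    (hCint : ∀ s, (interior (C s)).Nonempty)
    (hCdecr : ∀ s t', s ≤ t' → C t' ⊆ C s)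
    (b : EuclideanSpace ℝ (Fin m) → EuclideanSpace ℝ (Fin m))
    (σ : EuclideanSpace ℝ (Fin m) →
      (EuclideanSpace ℝ (Fin m) ≃L[ℝ] EuclideanSpace ℝ (Fin m)))
    (Kb Kσ : NNReal) (hb : LipschitzWith Kb b)
    (hσ : LipschitzWith Kσ fun v =>
      (σ v : EuclideanSpace ℝ (Fin m) →L[ℝ] EuclideanSpace ℝ (Fin m)))
    -- `Pr s` is the metric projection onto the convex body `C s`
    (Pr : ℝ → EuclideanSpace ℝ (Fin m) → EuclideanSpace ℝ (Fin m))
    (hPr : ∀ s x, Pr s x ∈ C s ∧ ∀ y ∈ C s, dist x (Pr s x) ≤ dist x y)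
    (x₀ : EuclideanSpace ℝ (Fin m)) (hx₀ : x₀ ∈ C 0)
    -- the Brownian increments of the independent copies of the scheme:
    -- `Z i j = W^i_{t_{j+1}} − W^i_{t_j}` for copy `i`, all coordinates of all increments
    -- of all copies being i.i.d. `N(0,T/n)` Gaussian random variables
    (Z : ℕ → ℕ → Ω → EuclideanSpace ℝ (Fin m)) (hZm : ∀ i j, Measurable (Z i j))
    (hZindep : iIndepFun
      (fun (p : ℕ × ℕ × Fin m) ω => Z p.1 p.2.1 ω p.2.2) P)
    (hZlaw : ∀ i j k, P.map (fun ω => Z i j ω k) = gaussianReal 0 (T / n).toNNReal)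
    -- the independent copies of the reflected Euler scheme
    (Xb : ℕ → ℕ → Ω → EuclideanSpace ℝ (Fin m)) (hXb0 : ∀ i ω, Xb i 0 ω = x₀)
    (hXbrec : ∀ i j ω, Xb i (j + 1) ω =
      Pr (t (j + 1)) (Xb i j ω + (T / n) • b (Xb i j ω) + σ (Xb i j ω) (Z i j ω))) :
    ∀ j, 1 ≤ j → j ≤ n →
      ∀ x ∈ interior (C (t j)), ∀ ε > (0:ℝ),
        Tendsto
          (fun N : ℕ =>
            P {ω | ε < infDist x (convexHull ℝ ((fun i => Xb i j ω) '' Set.Iio (N + 1)))})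
          atTop (nhds 0) :=
  stmt15_general P m T hT n hn t C hCconvex b σ Kb Kσ hb hσ Pr hPr x₀ Z hZm hZindep hZlaw Xb hXb0
    hXbrec
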